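/- arXiv:1207.1582 — 2 statements merged into one kernel-verified Lean document; each statement's English description precedes it below -/
import Mathlib

section
/- Let N ≥ 2, c ∈ (−1, 1/(N−1)), and α = c/(2(1+c)(1+c(1−N))). Define for σ > 0: I(σ) = ∫_{ℝ^N} exp(σ u_1 − α(∑_{i=1}^N u_i)² − (1/(2(1+c)))∑_{i=1}^N u_i²) ∏_{1≤i<j≤N}|u_j − u_i| du, and J = ∫_{ℝ^N} exp(−α(∑_{i=1}^N v_i)² − (1/(2(1+c)))∑_{i=1}^N v_i²) ∏_{2≤i<j≤N}|v_j − v_i| dv. Then as σ → ∞, I(σ) is asymptotically equivalent to (1+c)^{N−1} σ^{N−1} e^{σ²/2} · J, i.e. I(σ)/((1+c)^{N−1} σ^{N−1} e^{σ²/2} J) → 1. -/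
open MeasureTheory Finset Filter
open scoped Topology

/-!
Write `Q u = α (∑ u)² + β ∑ u²` with `β = 1/(2(1+c))`. Completing the square: `u = v + a`, with
`a` the maximiser of `u ↦ σ u₀ - Q u` (`a₀ = σ`, `aᵢ = -cσ` otherwise), turns the exponent into
`σ²/2 - Q v`, leaves the Vandermonde factors not involving `u₀` unchanged and turns the other
`N - 1` into `|v_j - v₀ - (1+c)σ|`. After division by `((1+c)σ)^(N-1)` these become
`|(v_j - v₀)/((1+c)σ) - 1| → 1`, and dominated convergence applies: every factor is at most
`exp (2 ∑ |v_k|)`, which the Gaussian weight absorbs because `Q v ≥ min β (β + Nα) ∑ v_k²` and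
both constants are positive for `c ∈ (-1, 1/(N-1))`. Finally `J > 0` since its integrand is
continuous, nonnegative and positive wherever the coordinates are distinct.
-/

lemma integrable_exp_mul_abs_sub_mul_sq (m : ℝ) {δ : ℝ} (hδ : 0 < δ) :
    Integrable fun x : ℝ => Real.exp (m * |x| - δ * x ^ 2) := by
  refine ((integrable_exp_neg_mul_sq (half_pos hδ)).const_mul (Real.exp (m ^ 2 / (2 * δ)))).mono'
    (by fun_prop : Continuous _).aestronglyMeasurable (Eventually.of_forall fun x => ?_)
  rw [Real.norm_eq_abs, abs_of_pos (Real.exp_pos _), ← Real.exp_add, Real.exp_le_exp,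
    ← sq_abs x]
  have hsq : 0 ≤ (δ * |x| - m) ^ 2 / (2 * δ) := by positivity
  have key : (δ * |x| - m) ^ 2 / (2 * δ) =
      m ^ 2 / (2 * δ) + -(δ / 2) * |x| ^ 2 - (m * |x| - δ * |x| ^ 2) := by
    field_simp; ring
  linarith

lemma prod_le_pow_of_le {κ : Type*} {s : Finset κ} {g : κ → ℝ} {B : ℝ} {n : ℕ} (hs : #s ≤ n)
    (hB : 1 ≤ B) (hg : ∀ i ∈ s, 0 ≤ g i ∧ g i ≤ B) : ∏ i ∈ s, g i ≤ B ^ n :=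
  calc ∏ i ∈ s, g i ≤ ∏ _i ∈ s, B := prod_le_prod (fun i hi => (hg i hi).1) fun i hi => (hg i hi).2
    _ ≤ B ^ n := by rw [prod_const]; exact pow_le_pow_right₀ hB hs

lemma abs_sub_div_self {y t : ℝ} (ht : 0 < t) : |y - t| / t = |y / t - 1| := by
  rw [div_sub_one ht.ne', abs_div, abs_of_pos ht]

section

variable {ι : Type*} [DecidableEq ι]

/-- For `α, β` as in `isCritical_laplaceCenter`, the maximiser of `u ↦ σ u i₀ - quadForm α β u`. -/
def laplaceCenter (σ c : ℝ) (i₀ : ι) : ι → ℝ :=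
  fun i => σ * ((1 + c) * (Pi.single i₀ 1 : ι → ℝ) i - c)

@[simp]
lemma laplaceCenter_self (σ c : ℝ) (i₀ : ι) : laplaceCenter σ c i₀ i₀ = σ := by
  simp [laplaceCenter]

end

section

variable {ι : Type*} [Fintype ι]

lemma integrable_exp_mul_sum_abs_sub_mul_sum_sq (m : ℝ) {δ : ℝ} (hδ : 0 < δ) :
    Integrable fun v : ι → ℝ => Real.exp (m * ∑ k, |v k| - δ * ∑ k, v k ^ 2) := by
  have h : (fun v : ι → ℝ => Real.exp (m * ∑ k, |v k| - δ * ∑ k, v k ^ 2)) =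
      fun v => ∏ k, Real.exp (m * |v k| - δ * v k ^ 2) := by
    ext v; rw [← Real.exp_sum, sum_sub_distrib, mul_sum, mul_sum]
  rw [h]
  exact Integrable.fintype_prod fun _ => integrable_exp_mul_abs_sub_mul_sq m hδ

lemma abs_sub_le_two_mul_sum_abs (v : ι → ℝ) (i j : ι) : |v j - v i| ≤ 2 * ∑ k, |v k| := by
  have hle : ∀ k, |v k| ≤ ∑ k, |v k| := fun k =>
    single_le_sum (fun k _ => abs_nonneg (v k)) (mem_univ k)
  linarith [abs_sub (v j) (v i), hle i, hle j]

def quadForm (α β : ℝ) (v : ι → ℝ) : ℝ := α * (∑ i, v i) ^ 2 + β * ∑ i, v i ^ 2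

lemma quadForm_add (α β : ℝ) (v a : ι → ℝ) :
    quadForm α β (v + a) =
      quadForm α β v + 2 * (α * (∑ i, v i) * ∑ i, a i + β * ∑ i, v i * a i) + quadForm α β a := by
  simp only [quadForm, Pi.add_apply, add_sq, sum_add_distrib, mul_assoc, ← mul_sum]
  ring

lemma mul_sum_sq_le_quadForm {α β δ : ℝ} (hδβ : δ ≤ β) (hδ : δ ≤ β + Fintype.card ι * α)
    (v : ι → ℝ) : δ * ∑ i, v i ^ 2 ≤ quadForm α β v := by
  have hsq : 0 ≤ ∑ i, v i ^ 2 := sum_nonneg fun i _ => sq_nonneg (v i)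
  unfold quadForm
  rcases le_or_gt 0 α with hα | hα
  · nlinarith [mul_nonneg hα (sq_nonneg (∑ i, v i)), mul_le_mul_of_nonneg_right hδβ hsq]
  · have hCS : (∑ i, v i) ^ 2 ≤ Fintype.card ι * ∑ i, v i ^ 2 := by
      simpa using sq_sum_le_card_mul_sum_sq (s := univ) (f := v)
    nlinarith [mul_le_mul_of_nonpos_left hCS hα.le, mul_le_mul_of_nonneg_right hδ hsq]

lemma linear_sub_quadForm_add_of_isCritical {α β σ : ℝ} {i₀ : ι} {a : ι → ℝ}
    (ha : ∀ v : ι → ℝ, 2 * (α * (∑ i, v i) * ∑ i, a i + β * ∑ i, v i * a i) = σ * v i₀)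
    (v : ι → ℝ) : σ * (v + a) i₀ - quadForm α β (v + a) = σ * a i₀ / 2 - quadForm α β v := by
  have haa : 2 * quadForm α β a = σ * a i₀ := by
    rw [← ha a, quadForm]; simp only [sq]; ring
  rw [quadForm_add, Pi.add_apply]
  linarith [ha v]

lemma isCritical_laplaceCenter [DecidableEq ι] {α β c : ℝ} (σ : ℝ) (i₀ : ι) (hc : 1 + c ≠ 0)
    (hcn : 1 + c * (1 - Fintype.card ι) ≠ 0)
    (hα : α = c / (2 * (1 + c) * (1 + c * (1 - Fintype.card ι)))) (hβ : β = 1 / (2 * (1 + c)))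
    (v : ι → ℝ) :
    2 * (α * (∑ i, v i) * ∑ i, laplaceCenter σ c i₀ i + β * ∑ i, v i * laplaceCenter σ c i₀ i)
      = σ * v i₀ := by
  have hsum : ∑ i, laplaceCenter σ c i₀ i = σ * (1 + c * (1 - Fintype.card ι)) := by
    simp only [laplaceCenter, mul_sub, sum_sub_distrib, ← mul_sum, sum_pi_single', mem_univ,
      ↓reduceIte, mul_one, sum_const, card_univ, nsmul_eq_mul]
    ring
  have hdot : ∑ i, v i * laplaceCenter σ c i₀ i = σ * ((1 + c) * v i₀ - c * ∑ i, v i) := by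
    simp only [laplaceCenter, Pi.single_apply, mul_ite, mul_one, mul_zero, mul_sub,
      sum_sub_distrib, sum_ite_eq', mem_univ, ↓reduceIte, ← sum_mul]
    ring
  rw [hsum, hdot, hα, hβ]
  field_simp
  ring

lemma prod_abs_div_sub_one_le_exp_pow (i₀ : ι) (s : Finset ι) {t : ℝ} (ht : 1 ≤ t) (v : ι → ℝ) :
    ∏ j ∈ s, |(v j - v i₀) / t - 1| ≤ Real.exp (2 * ∑ k, |v k|) ^ #s := by
  refine prod_le_pow_of_le le_rfl (Real.one_le_exp (by positivity)) fun j _ =>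
    ⟨abs_nonneg _, ?_⟩
  calc |(v j - v i₀) / t - 1| ≤ |v j - v i₀| / t + 1 := by
        simpa [abs_div, abs_of_pos (zero_lt_one.trans_le ht)] using abs_sub ((v j - v i₀) / t) 1
    _ ≤ |v j - v i₀| + 1 := by gcongr; exact div_le_self (abs_nonneg _) ht
    _ ≤ Real.exp (2 * ∑ k, |v k|) := by
        linarith [abs_sub_le_two_mul_sum_abs v i₀ j, Real.add_one_le_exp (2 * ∑ k, |v k|)]

lemma tendsto_integral_prod_abs_sub_div_pow {f : (ι → ℝ) → ℝ} (i₀ : ι) (s : Finset ι)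
    (hf : AEStronglyMeasurable f)
    (hf_exp : Integrable fun v => Real.exp (2 * #s * ∑ k, |v k|) * f v) :
    Tendsto (fun t => (∫ v, (∏ j ∈ s, |v j - v i₀ - t|) * f v) / t ^ #s) atTop
      (𝓝 (∫ v, f v)) := by
  have hrescale : ∀ᶠ t in atTop, (∫ v, (∏ j ∈ s, |v j - v i₀ - t|) * f v) / t ^ #s =
      ∫ v, (∏ j ∈ s, |(v j - v i₀) / t - 1|) * f v := by
    filter_upwards [eventually_gt_atTop 0] with t ht
    rw [← integral_div]
    refine integral_congr_ae (Eventually.of_forall fun v => ?_)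
    simp only [← prod_const, mul_div_right_comm, ← prod_div_distrib, abs_sub_div_self ht]
  refine Tendsto.congr' (EventuallyEq.symm hrescale) ?_
  refine tendsto_integral_filter_of_dominated_convergence _
    (Eventually.of_forall fun t => ?_) ?_ hf_exp.norm ?_
  · exact (by fun_prop : Continuous fun v : ι → ℝ => ∏ j ∈ s, |(v j - v i₀) / t - 1|)
      |>.aestronglyMeasurable.mul hf
  · filter_upwards [eventually_ge_atTop 1] with t ht
    refine Eventually.of_forall fun v => ?_
    have hprod := prod_abs_div_sub_one_le_exp_pow i₀ s ht v
    rw [norm_mul, norm_mul, Real.norm_of_nonneg (prod_nonneg fun _ _ => abs_nonneg _),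
      Real.norm_of_nonneg (Real.exp_pos _).le, mul_comm 2, mul_assoc, Real.exp_nat_mul]
    exact mul_le_mul_of_nonneg_right hprod (norm_nonneg _)
  · refine Eventually.of_forall fun v => ?_
    have : ∀ j ∈ s, Tendsto (fun t : ℝ => |(v j - v i₀) / t - 1|) atTop (𝓝 1) := fun j _ => by
      simpa using
        (((tendsto_const_nhds (x := v j - v i₀)).div_atTop tendsto_id).sub_const 1).abs
    simpa using (tendsto_finsetProd s this).mul_const (f v)

end

section

variable {ι : Type*} [Fintype ι] [LinearOrder ι]

def absVandermonde (s : Finset ι) (v : ι → ℝ) : ℝ :=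
  ∏ i ∈ s, ∏ j ∈ univ.filter fun j => i < j, |v j - v i|

lemma absVandermonde_nonneg (s : Finset ι) (v : ι → ℝ) : 0 ≤ absVandermonde s v :=
  prod_nonneg fun _ _ => prod_nonneg fun _ _ => abs_nonneg _

lemma absVandermonde_ne_zero {v : ι → ℝ} (hv : Function.Injective v) (s : Finset ι) :
    absVandermonde s v ≠ 0 :=
  prod_ne_zero_iff.2 fun _ _ => prod_ne_zero_iff.2 fun _ hj =>
    abs_ne_zero.2 <| sub_ne_zero.2 <| hv.ne (mem_filter.1 hj).2.ne'

lemma continuous_absVandermonde (s : Finset ι) : Continuous (absVandermonde s) := by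
  unfold absVandermonde; fun_prop

lemma absVandermonde_le_exp (s : Finset ι) (v : ι → ℝ) :
    absVandermonde s v ≤ Real.exp (2 * ∑ k, |v k|) ^ (Fintype.card ι * Fintype.card ι) := by
  have hB : 1 ≤ Real.exp (2 * ∑ k, |v k|) := Real.one_le_exp (by positivity)
  rw [pow_mul]
  refine prod_le_pow_of_le (card_le_univ s) (one_le_pow₀ hB) fun i _ =>
    ⟨prod_nonneg fun _ _ => abs_nonneg _, prod_le_pow_of_le (card_le_univ _) hB fun j _ =>
      ⟨abs_nonneg _, ?_⟩⟩
  linarith [abs_sub_le_two_mul_sum_abs v i j, Real.add_one_le_exp (2 * ∑ k, |v k|)]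

lemma filter_lt_eq_erase {i₀ : ι} (h₀ : IsBot i₀) :
    univ.filter (fun i => i₀ < i) = univ.erase i₀ := by
  ext i
  simp [(h₀ i).lt_iff_ne, eq_comm]

lemma absVandermonde_univ {i₀ : ι} (h₀ : IsBot i₀) (u : ι → ℝ) :
    absVandermonde univ u = (∏ j ∈ univ.filter (fun j => i₀ < j), |u j - u i₀|) *
      absVandermonde (univ.filter fun i => i₀ < i) u := by
  rw [absVandermonde, ← mul_prod_erase univ _ (mem_univ i₀), filter_lt_eq_erase h₀]
  rfl

lemma absVandermonde_univ_add_laplaceCenter {i₀ : ι} (h₀ : IsBot i₀) (σ c : ℝ) (u : ι → ℝ) :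
    absVandermonde univ (u + laplaceCenter σ c i₀) =
      (∏ j ∈ univ.filter (fun j => i₀ < j), |u j - u i₀ - (1 + c) * σ|) *
        absVandermonde (univ.filter fun i => i₀ < i) u := by
  rw [absVandermonde_univ h₀]
  congr 1
  · refine prod_congr rfl fun j hj => ?_
    rw [Pi.add_apply, Pi.add_apply, laplaceCenter_self, laplaceCenter,
      Pi.single_eq_of_ne (mem_filter.1 hj).2.ne']
    congr 1
    ring
  · refine prod_congr rfl fun i hi => prod_congr rfl fun j hj => ?_
    have hi₀ := (mem_filter.1 hi).2
    have hj₀ := hi₀.trans (mem_filter.1 hj).2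
    simp [laplaceCenter, hi₀.ne', hj₀.ne']

noncomputable def gaussVandermonde (α β : ℝ) (s : Finset ι) (v : ι → ℝ) : ℝ :=
  Real.exp (-quadForm α β v) * absVandermonde s v

lemma gaussVandermonde_nonneg (α β : ℝ) (s : Finset ι) (v : ι → ℝ) :
    0 ≤ gaussVandermonde α β s v :=
  mul_nonneg (Real.exp_pos _).le (absVandermonde_nonneg s v)

lemma continuous_gaussVandermonde (α β : ℝ) (s : Finset ι) :
    Continuous (gaussVandermonde α β s) := by
  have := continuous_absVandermonde s
  unfold gaussVandermonde quadForm
  fun_prop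

lemma integrable_exp_mul_sum_abs_mul_gaussVandermonde {α β : ℝ} (hβ : 0 < β)
    (hβα : 0 < β + Fintype.card ι * α) (s : Finset ι) (m : ℝ) :
    Integrable fun v : ι → ℝ => Real.exp (m * ∑ k, |v k|) * gaussVandermonde α β s v := by
  set δ := min β (β + Fintype.card ι * α)
  set n := Fintype.card ι
  refine (integrable_exp_mul_sum_abs_sub_mul_sum_sq (m + 2 * (n * n : ℕ)) (lt_min hβ hβα)).mono'
    (by have := continuous_gaussVandermonde α β s; fun_prop : Continuous _).aestronglyMeasurable
    (Eventually.of_forall fun v => ?_)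
  have hQ : δ * ∑ k, v k ^ 2 ≤ quadForm α β v :=
    mul_sum_sq_le_quadForm (min_le_left _ _) (min_le_right _ _) v
  rw [Real.norm_eq_abs, abs_of_nonneg (mul_nonneg (Real.exp_pos _).le (gaussVandermonde_nonneg ..)),
    gaussVandermonde, ← mul_assoc]
  calc Real.exp (m * ∑ k, |v k|) * Real.exp (-quadForm α β v) * absVandermonde s v
      ≤ Real.exp (m * ∑ k, |v k|) * Real.exp (-(δ * ∑ k, v k ^ 2)) *
          Real.exp (2 * ∑ k, |v k|) ^ (n * n) := by
        gcongr
        exacts [absVandermonde_nonneg s v, absVandermonde_le_exp s v]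
    _ = Real.exp ((m + 2 * (n * n : ℕ)) * ∑ k, |v k| - δ * ∑ k, v k ^ 2) := by
        rw [← Real.exp_nat_mul, ← Real.exp_add, ← Real.exp_add]
        ring_nf

lemma integral_gaussVandermonde_pos {α β : ℝ} (hβ : 0 < β) (hβα : 0 < β + Fintype.card ι * α)
    (s : Finset ι) : 0 < ∫ v, gaussVandermonde α β s v := by
  have hinj : Function.Injective fun i : ι => ((Fintype.equivFin ι i : ℕ) : ℝ) :=
    Nat.cast_injective.comp (Fin.val_injective.comp (Fintype.equivFin ι).injective)
  refine integral_pos_of_integrable_nonneg_nonzero (x := fun i => ((Fintype.equivFin ι i : ℕ) : ℝ))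
    (continuous_gaussVandermonde α β s) ?_ (gaussVandermonde_nonneg α β s)
    (mul_ne_zero (Real.exp_pos _).ne' (absVandermonde_ne_zero hinj s))
  simpa using integrable_exp_mul_sum_abs_mul_gaussVandermonde hβ hβα s 0

lemma integral_exp_sub_quadForm_mul_absVandermonde {α β c : ℝ} (hc : 1 + c ≠ 0)
    (hcn : 1 + c * (1 - Fintype.card ι) ≠ 0)
    (hα : α = c / (2 * (1 + c) * (1 + c * (1 - Fintype.card ι)))) (hβ : β = 1 / (2 * (1 + c)))
    {i₀ : ι} (h₀ : IsBot i₀) (σ : ℝ) :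
    ∫ u, Real.exp (σ * u i₀ - quadForm α β u) * absVandermonde univ u =
      Real.exp (σ ^ 2 / 2) *
        ∫ v, (∏ j ∈ univ.filter (fun j => i₀ < j), |v j - v i₀ - (1 + c) * σ|) *
        gaussVandermonde α β (univ.filter fun i => i₀ < i) v := by
  rw [← integral_add_right_eq_self _ (laplaceCenter σ c i₀), ← integral_const_mul]
  refine integral_congr_ae (Eventually.of_forall fun v => ?_)
  have hcrit := linear_sub_quadForm_add_of_isCritical
    (isCritical_laplaceCenter σ i₀ hc hcn hα hβ) v
  simp only at hcrit ⊢
  rw [hcrit, laplaceCenter_self, ← sq, sub_eq_add_neg, Real.exp_add,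
    absVandermonde_univ_add_laplaceCenter h₀, gaussVandermonde]
  ring

theorem tendsto_integral_exp_mul_absVandermonde_div {α β c : ℝ} (hc : 0 < 1 + c)
    (hcn : 0 < 1 + c * (1 - Fintype.card ι))
    (hα : α = c / (2 * (1 + c) * (1 + c * (1 - Fintype.card ι)))) (hβ : β = 1 / (2 * (1 + c)))
    {i₀ : ι} (h₀ : IsBot i₀) :
    Tendsto (fun σ => (∫ u, Real.exp (σ * u i₀ - quadForm α β u) * absVandermonde univ u) /
      (((1 + c) * σ) ^ (Fintype.card ι - 1) * Real.exp (σ ^ 2 / 2) *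
        ∫ v, gaussVandermonde α β (univ.filter fun i => i₀ < i) v)) atTop (𝓝 1) := by
  set s := univ.filter fun i => i₀ < i with hs_def
  have hβ_pos : 0 < β := hβ ▸ by positivity
  have hβα : 0 < β + Fintype.card ι * α := by
    have : β + Fintype.card ι * α = 1 / (2 * (1 + c * (1 - Fintype.card ι))) := by
      rw [hα, hβ]; field_simp; ring
    rw [this]
    positivity
  have hs : #s = Fintype.card ι - 1 := by
    rw [hs_def, filter_lt_eq_erase h₀, card_erase_of_mem (mem_univ _), card_univ]
  have hlim := ((tendsto_integral_prod_abs_sub_div_pow i₀ s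
    (continuous_gaussVandermonde α β s).aestronglyMeasurable
    (integrable_exp_mul_sum_abs_mul_gaussVandermonde hβ_pos hβα s _)).comp
    (tendsto_id.const_mul_atTop hc)).div_const (∫ v, gaussVandermonde α β s v)
  rw [hs, div_self (integral_gaussVandermonde_pos hβ_pos hβα s).ne'] at hlim
  refine hlim.congr' ?_
  filter_upwards [eventually_gt_atTop 0] with σ hσ
  rw [integral_exp_sub_quadForm_mul_absVandermonde hc.ne' hcn.ne' hα hβ h₀, ← hs_def,
    Function.comp_apply, id]
  field_simp

end

/-- Laplace-method asymptotics for the normalization constant of the matrix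
multiplicative chaos: as `σ → ∞`,
`I(σ) ∼ (1+c)^{N−1} σ^{N−1} e^{σ²/2} J`. -/
theorem stmt_9 (N : ℕ) (hN : 2 ≤ N) (c : ℝ)
    (hc : c ∈ Set.Ioo (-1 : ℝ) (1 / ((N : ℝ) - 1)))
    (α : ℝ) (hα : α = c / (2 * (1 + c) * (1 + c * (1 - N))))
    (I : ℝ → ℝ)
    (hI : I = fun σ => ∫ u : Fin N → ℝ,
        Real.exp (σ * u ⟨0, by omega⟩ - α * (∑ i, u i) ^ 2
            - (1 / (2 * (1 + c))) * ∑ i, u i ^ 2)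
          * ∏ i, ∏ j ∈ Finset.univ.filter fun j => i < j, |u j - u i|)
    (J : ℝ)
    (hJ : J = ∫ v : Fin N → ℝ,
        Real.exp (-α * (∑ i, v i) ^ 2 - (1 / (2 * (1 + c))) * ∑ i, v i ^ 2)
          * ∏ i ∈ Finset.univ.filter fun i : Fin N => (⟨0, by omega⟩ : Fin N) < i,
              ∏ j ∈ Finset.univ.filter fun j => i < j, |v j - v i|) :
    Tendsto (fun σ => I σ / ((1 + c) ^ (N - 1) * σ ^ (N - 1)
        * Real.exp (σ ^ 2 / 2) * J)) atTop (nhds 1) := by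
  obtain ⟨hc_gt, hc_lt⟩ := hc
  have hN₁ : (0 : ℝ) < N - 1 := by
    have : (2 : ℝ) ≤ N := by exact_mod_cast hN
    linarith
  have hcN : 0 < 1 + c * (1 - Fintype.card (Fin N)) := by
    rw [Fintype.card_fin]
    nlinarith [(lt_div_iff₀ hN₁).1 hc_lt]
  set i₀ : Fin N := ⟨0, by omega⟩
  have hlim := tendsto_integral_exp_mul_absVandermonde_div (α := α) (by linarith) hcN
    (by rwa [Fintype.card_fin]) rfl (i₀ := i₀) fun i => Nat.zero_le i.val
  rw [Fintype.card_fin] at hlim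
  refine hlim.congr fun σ => ?_
  rw [hI, hJ, mul_pow]
  simp only [quadForm, gaussVandermonde, absVandermonde, sub_sub, neg_add', neg_mul]
end

section
/- Let N ≥ 1 and k ≥ 2 be integers, fix indices j_1,…,j_k ∈ {1,…,N}, and for orthogonal matrices O^{(1)},…,O^{(k)} ∈ O_N(ℝ) set W = ∑_{1≤r<l≤k} ((ᵗO^{(r)} O^{(l)})_{j_r, j_l})² and T = (ᵗO^{(1)}O^{(2)})_{j_1,j_2} (ᵗO^{(2)}O^{(3)})_{j_2,j_3} ⋯ (ᵗO^{(k−1)}O^{(k)})_{j_{k−1},j_k} (ᵗO^{(k)}O^{(1)})_{j_k,j_1}. Define I(s) = ∫_{O_N(ℝ)^k} T e^{sW} dO^{(1)}⋯dO^{(k)}, the integral being with respect to the product of Haar probability measures. Then I(s) > 0 for all s large enough and lim_{s→∞} (1/s) ln I(s) = k(k−1)/2. -/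
open MeasureTheory Matrix Finset Filter

instance matrixMeasurableSpace {m n α : Type*} [MeasurableSpace α] :
    MeasurableSpace (Matrix m n α) :=
  (inferInstance : MeasurableSpace (m → n → α))

/-!
Let `u_r` be the `j_r`-th column of `O^{(r)}`, so that `W = ∑_{r<l} ⟪u_r, u_l⟫²` and
`T = ∏_r ⟪u_r, u_{r+1}⟫` with unit vectors `u_r`. Then `|T| ≤ 1` and `W ≤ M := k(k-1)/2`,
whence `I(s) ≤ e^{sM}`. If `W ≥ M - η`, every `⟪u_r, u_l⟫²` is at least `1 - η`, so each
factor `⟪u_r, u_{r+1}⟫` is within `η` of `⟪u_0, u_r⟫⟪u_0, u_{r+1}⟫`, and the product of the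
latter is `∏_r ⟪u_0, u_r⟫² ≥ 1 - kη`; hence `T ≥ 1/2` near the maximum of `W`. The value `M`
is attained at orthogonal matrices all of whose `j_r`-th columns coincide, and invariance of
the Haar measure gives their neighbourhoods positive mass. Laplace's principle then yields
`I(s) ≥ c e^{s(M - ε)}` for large `s`.
-/

open Topology
open scoped RealInnerProductSpace

section Laplace

variable {α : Type*} [MeasurableSpace α] {ν : Measure α} {T W : α → ℝ} {C M : ℝ}

lemma ae_norm_mul_exp_le (hTC : ∀ᵐ x ∂ν, |T x| ≤ C) (hWM : ∀ᵐ x ∂ν, W x ≤ M) {s : ℝ}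
    (hs : 0 ≤ s) : ∀ᵐ x ∂ν, ‖T x * Real.exp (s * W x)‖ ≤ C * Real.exp (s * M) := by
  filter_upwards [hTC, hWM] with x hTx hWx
  rw [norm_mul, Real.norm_eq_abs, Real.norm_of_nonneg (Real.exp_pos _).le]
  exact mul_le_mul hTx (Real.exp_le_exp.2 (mul_le_mul_of_nonneg_left hWx hs))
    (Real.exp_pos _).le ((abs_nonneg _).trans hTx)

lemma integral_mul_exp_le [IsFiniteMeasure ν] (hTC : ∀ᵐ x ∂ν, |T x| ≤ C)
    (hWM : ∀ᵐ x ∂ν, W x ≤ M) {s : ℝ} (hs : 0 ≤ s) :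
    ∫ x, T x * Real.exp (s * W x) ∂ν ≤ C * ν.real Set.univ * Real.exp (s * M) :=
  calc ∫ x, T x * Real.exp (s * W x) ∂ν ≤ ‖∫ x, T x * Real.exp (s * W x) ∂ν‖ := le_abs_self _
    _ ≤ C * Real.exp (s * M) * ν.real Set.univ :=
      norm_integral_le_of_norm_le_const (ae_norm_mul_exp_le hTC hWM hs)
    _ = C * ν.real Set.univ * Real.exp (s * M) := by ring

lemma sub_le_integral_mul_exp [IsFiniteMeasure ν] (hT : Measurable T) (hW : Measurable W)
    (hTC : ∀ᵐ x ∂ν, |T x| ≤ C) (hWM : ∀ᵐ x ∂ν, W x ≤ M) {η₀ c ε s : ℝ} (hc : 0 ≤ c)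
    (hTc : ∀ᵐ x ∂ν, M - η₀ ≤ W x → c ≤ T x) (hεη : ε ≤ η₀) (hs : 0 ≤ s) :
    c * ν.real {x | M - ε ≤ W x} * Real.exp (s * (M - ε))
        - C * ν.real Set.univ * Real.exp (s * (M - η₀))
      ≤ ∫ x, T x * Real.exp (s * W x) ∂ν := by
  set S := {x | M - ε ≤ W x}
  have hS : MeasurableSet S := measurableSet_le measurable_const hW
  have hint : Integrable (fun x => T x * Real.exp (s * W x)) ν :=
    .of_bound (hT.mul (measurable_const.mul hW).exp).aestronglyMeasurable _
      (ae_norm_mul_exp_le hTC hWM hs)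
  have hsimple : Integrable (fun x => S.indicator (fun _ => c * Real.exp (s * (M - ε))) x
      - C * Real.exp (s * (M - η₀))) ν :=
    ((integrable_const _).indicator hS).sub (integrable_const _)
  calc _ = ∫ x, (S.indicator (fun _ => c * Real.exp (s * (M - ε))) x
          - C * Real.exp (s * (M - η₀))) ∂ν := by
        rw [integral_sub ((integrable_const _).indicator hS) (integrable_const _),
          integral_indicator_const _ hS, integral_const, smul_eq_mul, smul_eq_mul]
        ring
    _ ≤ _ := integral_mono_ae hsimple hint ?_
  filter_upwards [hTC, hTc] with x hTx hcx
  have hC : 0 ≤ C := (abs_nonneg _).trans hTx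
  have he := Real.exp_pos (s * W x)
  have hCe := mul_nonneg hC (Real.exp_pos (s * (M - η₀))).le
  by_cases hxS : x ∈ S
  · have hxS' : M - ε ≤ W x := hxS
    have hcT := hcx (by linarith)
    have : c * Real.exp (s * (M - ε)) ≤ T x * Real.exp (s * W x) :=
      mul_le_mul hcT (Real.exp_le_exp.2 (mul_le_mul_of_nonneg_left hxS' hs))
        (Real.exp_pos _).le (hc.trans hcT)
    rw [Set.indicator_of_mem hxS]
    linarith
  rw [Set.indicator_of_notMem hxS, zero_sub, neg_le]
  by_cases hxη : M - η₀ ≤ W x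
  · nlinarith [hcx hxη]
  calc -(T x * Real.exp (s * W x)) ≤ |T x * Real.exp (s * W x)| := neg_le_abs _
    _ = |T x| * Real.exp (s * W x) := by rw [abs_mul, abs_of_pos he]
    _ ≤ C * Real.exp (s * (M - η₀)) :=
      mul_le_mul hTx (Real.exp_le_exp.2 (mul_le_mul_of_nonneg_left (by linarith) hs)) he.le hC

lemma exists_eventually_mul_exp_le_integral [IsFiniteMeasure ν] (hT : Measurable T)
    (hW : Measurable W) (hTC : ∀ᵐ x ∂ν, |T x| ≤ C) (hWM : ∀ᵐ x ∂ν, W x ≤ M) {η₀ c ε : ℝ}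
    (hc : 0 < c) (hTc : ∀ᵐ x ∂ν, M - η₀ ≤ W x → c ≤ T x) (hε : 0 < ν {x | M - ε ≤ W x})
    (hεη : ε < η₀) :
    ∃ a > 0, ∀ᶠ s in atTop, a * Real.exp (s * (M - ε)) ≤ ∫ x, T x * Real.exp (s * W x) ∂ν := by
  set p := ν.real {x | M - ε ≤ W x}
  have hp : 0 < p := ENNReal.toReal_pos hε.ne' (measure_ne_top _ _)
  refine ⟨c * p / 2, by positivity, ?_⟩
  have hdecay :
      Tendsto (fun s => C * ν.real Set.univ * Real.exp (-(s * (η₀ - ε)))) atTop (𝓝 0) := by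
    simpa using (Real.tendsto_exp_neg_atTop_nhds_zero.comp
      (tendsto_id.atTop_mul_const (sub_pos.2 hεη))).const_mul (C * ν.real Set.univ)
  filter_upwards [hdecay.eventually_lt_const (by positivity : (0 : ℝ) < c * p / 2),
    eventually_ge_atTop 0] with s hsmall hs
  have hlow := sub_le_integral_mul_exp hT hW hTC hWM hc.le hTc hεη.le hs
  have hsplit : Real.exp (s * (M - η₀)) = Real.exp (s * (M - ε)) * Real.exp (-(s * (η₀ - ε))) := by
    rw [← Real.exp_add]; ring_nf
  rw [hsplit] at hlow
  nlinarith [Real.exp_pos (s * (M - ε))]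

lemma log_mul_exp_div {a : ℝ} (ha : 0 < a) {s : ℝ} (hs : 0 < s) (m : ℝ) :
    Real.log (a * Real.exp (s * m)) / s = Real.log a / s + m := by
  rw [Real.log_mul ha.ne' (Real.exp_pos _).ne', Real.log_exp]
  field_simp

lemma tendsto_log_div_of_exp_bounds {f : ℝ → ℝ} {M b : ℝ}
    (hup : ∀ᶠ s in atTop, f s ≤ b * Real.exp (s * M))
    (hlow : ∀ᶠ ε in 𝓝[>] 0, ∃ a > 0, ∀ᶠ s in atTop, a * Real.exp (s * (M - ε)) ≤ f s) :
    Tendsto (fun s => Real.log (f s) / s) atTop (𝓝 M) := by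
  have hshift (a m : ℝ) : Tendsto (fun s => Real.log a / s + m) atTop (𝓝 m) := by
    simpa using (tendsto_const_nhds.div_atTop tendsto_id).add_const m
  refine tendsto_order.2 ⟨fun m hm => ?_, fun m hm => ?_⟩
  · obtain ⟨ε, ⟨a, ha, hfa⟩, hε, hεm⟩ := (hlow.and (Ioo_mem_nhdsGT (sub_pos.2 hm))).exists
    filter_upwards [hfa, (hshift a (M - ε)).eventually_const_lt (show m < M - ε by linarith),
      eventually_gt_atTop 0] with s hs hm' hs0
    rw [← log_mul_exp_div ha hs0] at hm'
    exact hm'.trans_le (div_le_div_of_nonneg_right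
      (Real.log_le_log (by positivity) hs) hs0.le)
  · obtain ⟨ε, a, ha, hfa⟩ := hlow.exists
    filter_upwards [hfa, hup, (hshift b M).eventually_lt_const hm,
      eventually_gt_atTop 0] with s hsa hsb hm' hs0
    have hf : 0 < f s := lt_of_lt_of_le (by positivity) hsa
    have hb : 0 < b := pos_of_mul_pos_left (hf.trans_le hsb) (Real.exp_pos _).le
    rw [← log_mul_exp_div hb hs0] at hm'
    exact (div_le_div_of_nonneg_right (Real.log_le_log hf hsb) hs0.le).trans_lt hm'

theorem eventually_pos_and_tendsto_log_integral_mul_exp_div [IsFiniteMeasure ν]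
    (hT : Measurable T) (hW : Measurable W) (hTC : ∀ᵐ x ∂ν, |T x| ≤ C) (hWM : ∀ᵐ x ∂ν, W x ≤ M)
    (hMess : ∀ ε > 0, 0 < ν {x | M - ε ≤ W x}) {η₀ c : ℝ} (hη₀ : 0 < η₀) (hc : 0 < c)
    (hTc : ∀ᵐ x ∂ν, M - η₀ ≤ W x → c ≤ T x) :
    (∀ᶠ s in atTop, 0 < ∫ x, T x * Real.exp (s * W x) ∂ν) ∧
      Tendsto (fun s => Real.log (∫ x, T x * Real.exp (s * W x) ∂ν) / s) atTop (𝓝 M) := by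
  have hlow : ∀ ε ∈ Set.Ioo 0 η₀, ∃ a > 0, ∀ᶠ s in atTop,
      a * Real.exp (s * (M - ε)) ≤ ∫ x, T x * Real.exp (s * W x) ∂ν := fun ε hε =>
    exists_eventually_mul_exp_le_integral hT hW hTC hWM hc hTc (hMess ε hε.1) hε.2
  refine ⟨?_, tendsto_log_div_of_exp_bounds (b := C * ν.real Set.univ) ?_ ?_⟩
  · obtain ⟨a, ha, hs⟩ := hlow (η₀ / 2) ⟨by positivity, by linarith⟩
    filter_upwards [hs] with s hs using lt_of_lt_of_le (by positivity) hs
  · filter_upwards [eventually_ge_atTop 0] with s hs using integral_mul_exp_le hTC hWM hs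
  · filter_upwards [Ioo_mem_nhdsGT hη₀] with ε hε using hlow ε hε

end Laplace

lemma abs_prod_sub_prod_le {ι : Type*} (s : Finset ι) {f g : ι → ℝ} (hf : ∀ i ∈ s, |f i| ≤ 1)
    (hg : ∀ i ∈ s, |g i| ≤ 1) : |∏ i ∈ s, f i - ∏ i ∈ s, g i| ≤ ∑ i ∈ s, |f i - g i| := by
  classical
  induction s using Finset.induction with
  | empty => simp
  | @insert a s ha ih =>
    rw [prod_insert ha, prod_insert ha, sum_insert ha]
    have hfs : |∏ i ∈ s, f i| ≤ 1 := by
      rw [abs_prod]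
      exact prod_le_one (fun _ _ => abs_nonneg _) fun i hi => hf i (mem_insert_of_mem hi)
    have hga := hg a (mem_insert_self a s)
    have ih' := ih (fun i hi => hf i (mem_insert_of_mem hi))
      (fun i hi => hg i (mem_insert_of_mem hi))
    calc |f a * ∏ i ∈ s, f i - g a * ∏ i ∈ s, g i|
        = |(f a - g a) * ∏ i ∈ s, f i + g a * (∏ i ∈ s, f i - ∏ i ∈ s, g i)| := by ring_nf
      _ ≤ |f a - g a| * |∏ i ∈ s, f i| + |g a| * |∏ i ∈ s, f i - ∏ i ∈ s, g i| := by
        rw [← abs_mul, ← abs_mul]; exact abs_add_le _ _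
      _ ≤ |f a - g a| * 1 + 1 * ∑ i ∈ s, |f i - g i| := by gcongr
      _ = |f a - g a| + ∑ i ∈ s, |f i - g i| := by ring

lemma one_sub_le_of_card_sub_le_sum {β : Type*} {s : Finset β} {f : β → ℝ} {η : ℝ}
    (hf : ∀ i ∈ s, f i ≤ 1) (hsum : #s - η ≤ ∑ i ∈ s, f i) {i : β} (hi : i ∈ s) :
    1 - η ≤ f i := by
  have h := single_le_sum (fun j hj => sub_nonneg.2 (hf j hj)) hi
  rw [sum_sub_distrib, sum_const, nsmul_one] at h
  linarith

lemma sum_sum_filter_lt {ι β : Type*} [Fintype ι] [LinearOrder ι] [AddCommMonoid β]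
    (F : ι → ι → β) :
    ∑ r, ∑ l ∈ univ.filter fun l => r < l, F r l =
      ∑ p ∈ univ.filter fun p : ι × ι => p.1 < p.2, F p.1 p.2 := by
  rw [sum_filter, ← univ_product_univ, sum_product]
  simp_rw [sum_filter]

section Gram

variable {E : Type*} [NormedAddCommGroup E] [InnerProductSpace ℝ E]

lemma abs_real_inner_le_one {x y : E} (hx : ‖x‖ = 1) (hy : ‖y‖ = 1) : |⟪x, y⟫| ≤ 1 := by
  simpa [hx, hy] using abs_real_inner_le_norm x y

-- Cauchy–Schwarz for the components of `v` and `w` orthogonal to `u`.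
lemma sq_inner_sub_mul_inner_le {u v w : E} (hu : ‖u‖ = 1) :
    (⟪v, w⟫ - ⟪u, v⟫ * ⟪u, w⟫) ^ 2 ≤ (‖v‖ ^ 2 - ⟪u, v⟫ ^ 2) * (‖w‖ ^ 2 - ⟪u, w⟫ ^ 2) := by
  have h := real_inner_mul_inner_self_le (v - ⟪u, v⟫ • u) (w - ⟪u, w⟫ • u)
  simp only [inner_sub_left, inner_sub_right, real_inner_smul_left, real_inner_smul_right,
    real_inner_self_eq_norm_sq, norm_smul, mul_pow, Real.norm_eq_abs, sq_abs, hu,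
    real_inner_comm u] at h
  linear_combination h

variable {ι : Type*} [Fintype ι] {u : ι → E}

lemma abs_prod_inner_le_one (hu : ∀ i, ‖u i‖ = 1) (f : ι → ι) : |∏ i, ⟪u i, u (f i)⟫| ≤ 1 := by
  rw [abs_prod]
  exact prod_le_one (fun _ _ => abs_nonneg _) fun i _ => abs_real_inner_le_one (hu i) (hu _)

lemma one_sub_le_prod_inner_of_le_sq_inner (σ : Equiv.Perm ι) (hu : ∀ i, ‖u i‖ = 1) {η : ℝ}
    (hη : ∀ i l, 1 - η ≤ ⟪u i, u l⟫ ^ 2) :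
    1 - 2 * Fintype.card ι * η ≤ ∏ i, ⟪u i, u (σ i)⟫ := by
  rcases isEmpty_or_nonempty ι with hι | ⟨⟨i₀⟩⟩
  · simp
  have habs : ∀ i l, |⟪u i, u l⟫| ≤ 1 := fun i l => abs_real_inner_le_one (hu i) (hu l)
  have hsq : ∀ i l, ⟪u i, u l⟫ ^ 2 ≤ 1 := fun i l => (sq_le_one_iff_abs_le_one _).2 (habs i l)
  have hη0 : 0 ≤ η := by linarith [hη i₀ i₀, hsq i₀ i₀]
  have hnear : ∀ i, |⟪u i, u (σ i)⟫ - ⟪u i₀, u i⟫ * ⟪u i₀, u (σ i)⟫| ≤ η := by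
    intro i
    have h := sq_inner_sub_mul_inner_le (v := u i) (w := u (σ i)) (hu i₀)
    rw [hu, hu, one_pow] at h
    refine abs_le_of_sq_le_sq (h.trans ?_) hη0
    nlinarith [hη i₀ i, hη i₀ (σ i), hsq i₀ i, hsq i₀ (σ i)]
  have hsquares : ∏ i, (⟪u i₀, u i⟫ * ⟪u i₀, u (σ i)⟫) = ∏ i, ⟪u i₀, u i⟫ ^ 2 := by
    rw [prod_mul_distrib, Equiv.prod_comp σ fun i => ⟪u i₀, u i⟫, ← prod_mul_distrib]
    simp only [sq]
  have hfactors : |∏ i, ⟪u i, u (σ i)⟫ - ∏ i, ⟪u i₀, u i⟫ ^ 2| ≤ Fintype.card ι * η := by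
    rw [← hsquares]
    calc _ ≤ ∑ i, |⟪u i, u (σ i)⟫ - ⟪u i₀, u i⟫ * ⟪u i₀, u (σ i)⟫| :=
          abs_prod_sub_prod_le _ (fun i _ => habs _ _) fun i _ => by
            rw [abs_mul]; exact mul_le_one₀ (habs _ _) (abs_nonneg _) (habs _ _)
      _ ≤ ∑ _i : ι, η := sum_le_sum fun i _ => hnear i
      _ = Fintype.card ι * η := by simp
  have hone : |∏ i, ⟪u i₀, u i⟫ ^ 2 - ∏ _i : ι, (1 : ℝ)| ≤ Fintype.card ι * η := by
    calc _ ≤ ∑ i, |⟪u i₀, u i⟫ ^ 2 - 1| :=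
          abs_prod_sub_prod_le _ (fun i _ => by rw [abs_sq]; exact hsq _ _) fun _ _ => by simp
      _ ≤ ∑ _i : ι, η := sum_le_sum fun i _ => by
          rw [abs_sub_comm, abs_of_nonneg (sub_nonneg.2 (hsq i₀ i))]; linarith [hη i₀ i]
      _ = Fintype.card ι * η := by simp
  rw [prod_const_one] at hone
  linarith [(abs_le.1 hfactors).1, (abs_le.1 hone).1]

variable [LinearOrder ι]

lemma sum_sq_inner_le_choose_two (hu : ∀ i, ‖u i‖ = 1) :
    ∑ r, ∑ l ∈ univ.filter fun l => r < l, ⟪u r, u l⟫ ^ 2 ≤ (Fintype.card ι).choose 2 := by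
  rw [sum_sum_filter_lt, ← Fintype.card_product_filter_lt]
  simpa using sum_le_card_nsmul _ _ 1 fun p _ =>
    (sq_le_one_iff_abs_le_one _).2 (abs_real_inner_le_one (hu p.1) (hu p.2))

lemma le_sq_inner_of_choose_two_sub_le (hu : ∀ i, ‖u i‖ = 1) {η : ℝ}
    (hW : (Fintype.card ι).choose 2 - η ≤ ∑ r, ∑ l ∈ univ.filter fun l => r < l, ⟪u r, u l⟫ ^ 2)
    (i l : ι) : 1 - η ≤ ⟪u i, u l⟫ ^ 2 := by
  have hlt : ∀ i l : ι, i < l → 1 - η ≤ ⟪u i, u l⟫ ^ 2 := fun i l hil => by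
    rw [sum_sum_filter_lt, ← Fintype.card_product_filter_lt] at hW
    exact one_sub_le_of_card_sub_le_sum (f := fun p : ι × ι => ⟪u p.1, u p.2⟫ ^ 2)
      (fun p _ => (sq_le_one_iff_abs_le_one _).2 (abs_real_inner_le_one (hu p.1) (hu p.2)))
      hW (mem_filter.2 ⟨mem_univ (i, l), hil⟩)
  rcases lt_trichotomy i l with hil | rfl | hli
  · exact hlt i l hil
  · rw [real_inner_self_eq_norm_sq, hu, one_pow, one_pow]
    linarith [sum_sq_inner_le_choose_two hu]
  · rw [real_inner_comm]; exact hlt l i hli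

end Gram

section OrthogonalGroup

variable {n : Type*} [Fintype n]

lemma transpose_mul_apply_eq_inner (A B : Matrix n n ℝ) (a b : n) :
    (Aᵀ * B) a b = ⟪(WithLp.toLp 2 (Aᵀ a) : EuclideanSpace ℝ n), WithLp.toLp 2 (Bᵀ b)⟫ := by
  simp [Matrix.mul_apply, PiLp.inner_apply, mul_comm]

lemma norm_toLp_transpose_apply [DecidableEq n] {A : Matrix n n ℝ}
    (hA : A ∈ orthogonalGroup n ℝ) (a : n) :
    ‖(WithLp.toLp 2 (Aᵀ a) : EuclideanSpace ℝ n)‖ = 1 := by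
  have h : ‖(WithLp.toLp 2 (Aᵀ a) : EuclideanSpace ℝ n)‖ ^ 2 = 1 := by
    rw [← real_inner_self_eq_norm_sq, ← transpose_mul_apply_eq_inner,
      (mem_orthogonalGroup_iff' n ℝ).1 hA, one_apply_eq]
  exact (pow_eq_one_iff_of_nonneg (norm_nonneg _) two_ne_zero).1 h

lemma permMatrix_mem_orthogonalGroup [DecidableEq n] {R : Type*} [CommRing R] [StarRing R]
    [TrivialStar R] (σ : Equiv.Perm n) : σ.permMatrix R ∈ orthogonalGroup n R := by
  rw [mem_orthogonalGroup_iff', transpose_permMatrix, ← permMatrix_mul, mul_inv_cancel,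
    permMatrix_one]

lemma exists_mem_orthogonalGroup_transpose_apply_eq_single [DecidableEq n] (a b : n) :
    ∃ P ∈ orthogonalGroup n ℝ, Pᵀ a = Pi.single b 1 :=
  ⟨(Equiv.swap b a).permMatrix ℝ, permMatrix_mem_orthogonalGroup _, by
    ext i
    simp [Equiv.Perm.permMatrix, PEquiv.toMatrix_apply, Pi.single_apply, Equiv.swap_apply_eq_iff]⟩

end OrthogonalGroup

instance matrixSecondCountableTopology {m n α : Type*} [Countable m] [Countable n]
    [TopologicalSpace α] [SecondCountableTopology α] : SecondCountableTopology (Matrix m n α) :=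
  inferInstanceAs (SecondCountableTopology (m → n → α))

instance matrixBorelSpace {m n α : Type*} [Countable m] [Countable n] [TopologicalSpace α]
    [SecondCountableTopology α] [MeasurableSpace α] [BorelSpace α] :
    BorelSpace (Matrix m n α) :=
  inferInstanceAs (BorelSpace (m → n → α))

-- The left translates of a neighbourhood of `x` cover `unitary G`; countably many of them do,
-- and by invariance each of them has the same measure.
lemma measure_pos_of_mem_nhds_of_mem_unitary {G : Type*} [Monoid G] [StarMul G]
    [TopologicalSpace G] [ContinuousMul G] [SecondCountableTopology G] [MeasurableSpace G]
    [BorelSpace G] {μ : Measure G} (hμ : μ (unitary G) ≠ 0)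
    (hinv : ∀ Q ∈ unitary G, Measure.map (fun O => Q * O) μ = μ) {x : G} (hx : x ∈ unitary G)
    {U : Set G} (hU : U ∈ 𝓝 x) : 0 < μ U := by
  obtain ⟨V, hVU, hVo, hxV⟩ := mem_nhds_iff.1 hU
  refine (pos_iff_ne_zero.2 fun hV => hμ ?_).trans_le (measure_mono hVU)
  set t : unitary G → Set G := fun P => (fun O => x * star (P : G) * O) ⁻¹' V
  obtain ⟨S, hS, hSt⟩ := TopologicalSpace.isOpen_iUnion_countable t
    fun P => hVo.preimage (continuous_const_mul _)
  have hcover : (unitary G : Set G) ⊆ ⋃ P ∈ S, t P := by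
    intro P hP
    rw [hSt]
    exact Set.mem_iUnion.2 ⟨⟨P, hP⟩, by simp [t, mul_assoc, Unitary.star_mul_self_of_mem hP, hxV]⟩
  refine measure_mono_null hcover ((measure_biUnion_null_iff hS).2 fun P _ => ?_)
  rw [← Measure.map_apply (continuous_const_mul _).measurable hVo.measurableSet,
    hinv _ (mul_mem hx (Unitary.star_mem P.2))]
  exact hV

lemma pi_measure_pos_of_mem_nhds {ι : Type*} [Fintype ι] {X : ι → Type*}
    [∀ i, TopologicalSpace (X i)] [∀ i, MeasurableSpace (X i)] {μ : ∀ i, Measure (X i)}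
    [∀ i, SigmaFinite (μ i)] {x : ∀ i, X i} (hx : ∀ i, ∀ V ∈ 𝓝 (x i), 0 < μ i V)
    {U : Set (∀ i, X i)} (hU : U ∈ 𝓝 x) : 0 < Measure.pi μ U := by
  obtain ⟨U', hU'U, hU'o, hxU'⟩ := mem_nhds_iff.1 hU
  obtain ⟨V, hV, hVU'⟩ := isOpen_pi_iff'.1 hU'o x hxU'
  refine lt_of_lt_of_le ?_ (measure_mono (hVU'.trans hU'U))
  rw [Measure.pi_pi]
  exact CanonicallyOrderedAdd.prod_pos.2 fun i _ => hx i _ ((hV i).1.mem_nhds (hV i).2)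

lemma continuous_transpose_mul_apply {ι n : Type*} [Fintype n] (r l : ι) (a b : n) :
    Continuous fun O : ι → Matrix n n ℝ => ((O r)ᵀ * O l) a b :=
  (((continuous_apply r).matrix_transpose).matrix_mul (continuous_apply l)).matrix_elem a b

section OrthogonalTuples

variable {ι n : Type*} [Fintype ι] [Fintype n] [DecidableEq n]

lemma ae_forall_mem_orthogonalGroup {μ : Measure (Matrix n n ℝ)} [IsProbabilityMeasure μ]
    (hμ : μ (orthogonalGroup n ℝ) = 1) :
    ∀ᵐ O ∂Measure.pi (fun _ : ι => μ), ∀ r, O r ∈ orthogonalGroup n ℝ := by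
  have hG : MeasurableSet (orthogonalGroup n ℝ : Set (Matrix n n ℝ)) :=
    isClosed_unitary.measurableSet
  exact ae_all_iff.2 fun r => Measure.tendsto_eval_ae_ae.eventually
    ((ae_iff_measure_eq hG.nullMeasurableSet).2 (hμ.trans measure_univ.symm))

variable {O : ι → Matrix n n ℝ}

lemma abs_prod_transpose_mul_apply_le_one (hO : ∀ r, O r ∈ orthogonalGroup n ℝ) (j : ι → n)
    (f : ι → ι) : |∏ r, ((O r)ᵀ * O (f r)) (j r) (j (f r))| ≤ 1 := by
  simpa only [transpose_mul_apply_eq_inner] using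
    abs_prod_inner_le_one (fun r => norm_toLp_transpose_apply (hO r) (j r)) f

variable [LinearOrder ι]

lemma sum_sq_transpose_mul_apply_le_choose_two (hO : ∀ r, O r ∈ orthogonalGroup n ℝ)
    (j : ι → n) :
    ∑ r, ∑ l ∈ univ.filter fun l => r < l, (((O r)ᵀ * O l) (j r) (j l)) ^ 2
      ≤ (Fintype.card ι).choose 2 := by
  simpa only [transpose_mul_apply_eq_inner] using
    sum_sq_inner_le_choose_two fun r => norm_toLp_transpose_apply (hO r) (j r)

lemma one_sub_le_prod_transpose_mul_apply (hO : ∀ r, O r ∈ orthogonalGroup n ℝ) (j : ι → n)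
    (σ : Equiv.Perm ι) {η : ℝ}
    (hW : (Fintype.card ι).choose 2 - η
      ≤ ∑ r, ∑ l ∈ univ.filter fun l => r < l, (((O r)ᵀ * O l) (j r) (j l)) ^ 2) :
    1 - 2 * Fintype.card ι * η ≤ ∏ r, ((O r)ᵀ * O (σ r)) (j r) (j (σ r)) := by
  have hu := fun r => norm_toLp_transpose_apply (hO r) (j r)
  simp only [transpose_mul_apply_eq_inner] at hW ⊢
  exact one_sub_le_prod_inner_of_le_sq_inner σ hu (le_sq_inner_of_choose_two_sub_le hu hW)

lemma exists_sum_sq_transpose_mul_apply_eq_choose_two [Nonempty n] (j : ι → n) :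
    ∃ P : ι → Matrix n n ℝ, (∀ r, P r ∈ orthogonalGroup n ℝ) ∧
      ∑ r, ∑ l ∈ univ.filter fun l => r < l, (((P r)ᵀ * P l) (j r) (j l)) ^ 2
        = (Fintype.card ι).choose 2 := by
  obtain ⟨b⟩ := ‹Nonempty n›
  choose P hP hPcol using fun r => exists_mem_orthogonalGroup_transpose_apply_eq_single (j r) b
  refine ⟨P, hP, ?_⟩
  rw [← Fintype.card_product_filter_lt, sum_sum_filter_lt]
  simp [transpose_mul_apply_eq_inner, hPcol]

lemma pi_measure_pos_choose_two_sub_le_sum_sq [Nonempty n] {μ : Measure (Matrix n n ℝ)}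
    [SigmaFinite μ] (hμ : μ (orthogonalGroup n ℝ) ≠ 0)
    (hinv : ∀ Q ∈ orthogonalGroup n ℝ, Measure.map (fun O => Q * O) μ = μ) (j : ι → n)
    {ε : ℝ} (hε : 0 < ε) :
    0 < Measure.pi (fun _ : ι => μ) {O | (Fintype.card ι).choose 2 - ε
      ≤ ∑ r, ∑ l ∈ univ.filter fun l => r < l, (((O r)ᵀ * O l) (j r) (j l)) ^ 2} := by
  obtain ⟨P, hP, hWP⟩ := exists_sum_sq_transpose_mul_apply_eq_choose_two j
  have hW : Continuous fun O : ι → Matrix n n ℝ =>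
      ∑ r, ∑ l ∈ univ.filter fun l => r < l, (((O r)ᵀ * O l) (j r) (j l)) ^ 2 :=
    continuous_finsetSum _ fun r _ => continuous_finsetSum _ fun l _ =>
      (continuous_transpose_mul_apply r l _ _).pow 2
  exact pi_measure_pos_of_mem_nhds
    (fun r V hV => measure_pos_of_mem_nhds_of_mem_unitary hμ hinv (hP r) hV)
    (hW.continuousAt.preimage_mem_nhds (Ici_mem_nhds (by linarith)))

end OrthogonalTuples

/-- Logarithmic Laplace asymptotics for the cyclic orthogonal-group integral:
with `T` the cyclic product `(ᵗO^{(1)}O^{(2)})_{j_1,j_2} ⋯ (ᵗO^{(k)}O^{(1)})_{j_k,j_1}`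
and `W = ∑_{r<l} ((ᵗO^{(r)}O^{(l)})_{j_r,j_l})²`, the integral
`I(s) = ∫ T e^{sW} dO^{(1)}⋯dO^{(k)}` is eventually positive and
`(1/s) ln I(s) → k(k−1)/2` as `s → ∞`. -/
theorem stmt_18 (N : ℕ) (k : ℕ) (hk : 2 ≤ k)
    (μ : Measure (Matrix (Fin N) (Fin N) ℝ)) [IsProbabilityMeasure μ]
    (hμsupp : μ {O | O ∈ Matrix.orthogonalGroup (Fin N) ℝ} = 1)
    (hμinv : ∀ Q ∈ Matrix.orthogonalGroup (Fin N) ℝ,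
        Measure.map (fun O => Q * O) μ = μ)
    (j : Fin k → Fin N)
    (W : (Fin k → Matrix (Fin N) (Fin N) ℝ) → ℝ)
    (hW : W = fun O => ∑ r, ∑ l ∈ Finset.univ.filter fun l => r < l,
        (((O r)ᵀ * O l) (j r) (j l)) ^ 2)
    (T : (Fin k → Matrix (Fin N) (Fin N) ℝ) → ℝ)
    (hT : T = fun O => ∏ r : Fin k,
        ((O r)ᵀ * O (r + ⟨1, by omega⟩)) (j r) (j (r + ⟨1, by omega⟩)))
    (I : ℝ → ℝ)
    (hI : I = fun s => ∫ O, T O * Real.exp (s * W O)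
        ∂(Measure.pi fun _ : Fin k => μ)) :
    (∃ s₀ : ℝ, ∀ s, s₀ ≤ s → 0 < I s) ∧
      Tendsto (fun s => Real.log (I s) / s) atTop (nhds ((k * (k - 1) : ℝ) / 2)) := by
  have : NeZero k := ⟨by omega⟩
  have : Nonempty (Fin N) := ⟨j 0⟩
  have hM : (k * (k - 1) : ℝ) / 2 = (Fintype.card (Fin k)).choose 2 := by
    rw [Fintype.card_fin, Nat.cast_choose_two]
  have hortho := ae_forall_mem_orthogonalGroup (ι := Fin k) hμsupp
  have hThalf : ∀ᵐ O ∂Measure.pi (fun _ : Fin k => μ),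
      (Fintype.card (Fin k)).choose 2 - 1 / (4 * k) ≤ W O → 1 / 2 ≤ T O :=
    hortho.mono fun O hO hWO => by
      have h := one_sub_le_prod_transpose_mul_apply hO j (Equiv.addRight ⟨1, by omega⟩)
        (hW ▸ hWO)
      rw [Fintype.card_fin, show (1 - 2 * k * (1 / (4 * k)) : ℝ) = 1 / 2 by field_simp; ring] at h
      rw [hT]
      exact h
  subst hW hT hI
  rw [hM]
  obtain ⟨hpos, hlim⟩ := eventually_pos_and_tendsto_log_integral_mul_exp_div
    (continuous_finsetProd _ fun r _ => continuous_transpose_mul_apply _ _ _ _).measurable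
    (continuous_finsetSum _ fun r _ => continuous_finsetSum _ fun l _ =>
      (continuous_transpose_mul_apply _ _ _ _).pow 2).measurable
    (hortho.mono fun O hO => abs_prod_transpose_mul_apply_le_one hO j _)
    (hortho.mono fun O hO => sum_sq_transpose_mul_apply_le_choose_two hO j)
    (fun ε hε => pi_measure_pos_choose_two_sub_le_sum_sq (ne_of_eq_of_ne hμsupp one_ne_zero)
      hμinv j hε) (by positivity) (by norm_num) hThalf
  exact ⟨eventually_atTop.1 hpos, hlim⟩
end
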